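/- arXiv:2507.11850 — 3 statements merged into one kernel-verified Lean document; each statement's English description precedes it below -/
import Mathlib

section
/- Let K ⊂ ℝ² be an origin-symmetric convex body whose boundary is parametrized by an L-periodic regular curve γ : ℝ → ℝ² of class C², injective on [0,L), positively oriented, with γ(s + L/2) = −γ(s) and det(γ(s), γ'(s)) > 0 for all s. Let δ* = (1/4)·∫₀^L det(γ(u), γ'(u)) du (half the area of K), let r₂(s) = γ(s) + (1/(3δ*))·∫_s^{s+L/2} (γ(u) − γ(s))·det(γ(u) − γ(s), γ'(u)) du be the buoyancy curve for density one half, and let γ*(s) = γ'(s) / (2·det(γ(s), γ'(s))) (a parametrization of the boundary of the polar of the intersection body of K). If there exist z ∈ ℝ² and λ > 0 such that r₂(s) = z + λ·(γ*(s) − z) for all s, then the image of γ is an ellipse. -/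
open Real MeasureTheory intervalIntegral

noncomputable section

/-- The Euclidean plane. -/
abbrev R2 := EuclideanSpace ℝ (Fin 2)

/-- The planar determinant `det(u,v) = u₁v₂ − u₂v₁`. -/
def det2 (u v : R2) : ℝ := u 0 * v 1 - u 1 * v 0

/-- The flotation curve `r₁(s) = (γ(s) + γ(t(s)))/2`. -/
def flotCurve (γ : ℝ → R2) (t : ℝ → ℝ) (s : ℝ) : R2 := ((1:ℝ)/2) • (γ s + γ (t s))

/-- The buoyancy (centroid) curve
`r₂(s) = γ(s) + (1/(3δ))·∫_s^{t(s)} det(γ(u) − γ(s), γ'(u))·(γ(u) − γ(s)) du`. -/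
def buoyCurve (γ : ℝ → R2) (t : ℝ → ℝ) (δ : ℝ) (s : ℝ) : R2 :=
  γ s + (1/(3*δ)) • ∫ u in s..t s, det2 (γ u - γ s) (deriv γ u) • (γ u - γ s)

def curveA (γ : ℝ → R2) (L : ℝ) (s : ℝ) : R2 :=
  ∫ u in s..(s + L/2), det2 (γ u) (deriv γ u) • γ u

def phiF (γ : ℝ → R2) (k : ℝ) (s : ℝ) : ℝ := k * ∫ u in (0:ℝ)..s, det2 (γ u) (deriv γ u)

def vF (γ : ℝ → R2) (L k : ℝ) (s : ℝ) : R2 :=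
  Real.cos (phiF γ k s) • γ s - (k/2) • (Real.sin (phiF γ k s) • curveA γ L s)

def wF (γ : ℝ → R2) (L k : ℝ) (s : ℝ) : R2 :=
  Real.sin (phiF γ k s) • γ s + (k/2) • (Real.cos (phiF γ k s) • curveA γ L s)

lemma det2_neg_neg (u v : R2) : det2 (-u) (-v) = det2 u v := by simp [det2]

lemma det2_smul_right (u v : R2) (a : ℝ) : det2 u (a • v) = a * det2 u v := by
  simp [det2, PiLp.smul_apply, smul_eq_mul]; ring

lemma integral_comp_R2 (f : ℝ → R2) (hf : Continuous f) (a b : ℝ) (i : Fin 2) :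
    (∫ u in a..b, f u) i = ∫ u in a..b, f u i := by
  have := (EuclideanSpace.proj (𝕜 := ℝ) i).intervalIntegral_comp_comm (μ := volume)
    (hf.intervalIntegrable a b)
  simpa [EuclideanSpace.proj, PiLp.proj_apply] using this.symm

lemma hasDerivAt_primitive {E : Type*} [NormedAddCommGroup E] [NormedSpace ℝ E]
    [CompleteSpace E] (f : ℝ → E) (hf : Continuous f) (b : ℝ) :
    HasDerivAt (fun u => ∫ x in (0:ℝ)..u, f x) (f b) b :=
  intervalIntegral.integral_hasDerivAt_right (hf.intervalIntegrable 0 b)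
    (hf.stronglyMeasurable.stronglyMeasurableAtFilter) hf.continuousAt

lemma stage2 (γ : ℝ → R2) (L δstar : ℝ) (hL : 0 < L)
    (hdγ : Differentiable ℝ γ) (hdg : Differentiable ℝ (deriv γ))
    (hsym : ∀ s, γ (s + L/2) = -γ s)
    (hδstar : δstar = (1/4) * ∫ u in (0:ℝ)..L, det2 (γ u) (deriv γ u)) :
    (∀ s, (∫ u in s..(s + L/2), det2 (γ u) (deriv γ u)) = 2 * δstar)
    ∧ (∀ s, (∫ u in s..(s + L/2), deriv γ u 1 * γ u 0) = δstar)
    ∧ (∀ s, (∫ u in s..(s + L/2), deriv γ u 0 * γ u 1) = -δstar)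
    ∧ (∀ s, (∫ u in s..(s + L/2), deriv γ u 0 * γ u 0) = 0)
    ∧ (∀ s, (∫ u in s..(s + L/2), deriv γ u 1 * γ u 1) = 0) := by
  have hγc : Continuous γ := hdγ.continuous
  have hgc : Continuous (deriv γ) := hdg.continuous
  have hci : ∀ i : Fin 2, Continuous fun u => γ u i := fun i =>
    ((EuclideanSpace.proj (𝕜 := ℝ) i).continuous.comp hγc : _)
  have hgi : ∀ i : Fin 2, Continuous fun u => deriv γ u i := fun i =>
    ((EuclideanSpace.proj (𝕜 := ℝ) i).continuous.comp hgc : _)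
  have hpc : Continuous fun u => det2 (γ u) (deriv γ u) :=
    (((hci 0).mul (hgi 1)).sub ((hci 1).mul (hgi 0)) : _)
  have hderivi : ∀ (i : Fin 2) (x : ℝ), HasDerivAt (fun u => γ u i) (deriv γ x i) x := fun i x =>
    (EuclideanSpace.proj (𝕜:=ℝ) i).hasFDerivAt.comp_hasDerivAt x (hdγ x).hasDerivAt
  -- derivative of the symmetry relation
  have hgsym : ∀ s, deriv γ (s + L/2) = -(deriv γ s) := by
    intro s
    have h1 : (fun x => γ (x + L/2)) = fun x => -(γ x) := funext hsym
    have h2 : deriv (fun x => γ (x + L/2)) s = deriv γ (s + L/2) := deriv_comp_add_const γ (L/2) s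
    rw [h1] at h2
    rw [← h2, deriv.fun_neg]
  have hL2 : γ (L/2) = -γ 0 := by have := hsym 0; rwa [zero_add] at this
  -- periodicity of scalar products
  have hpper : Function.Periodic (fun u => det2 (γ u) (deriv γ u)) (L/2) := by
    intro u; simp only [hsym u, hgsym u, det2]; simp [PiLp.neg_apply]
  have hTper : ∀ i j : Fin 2, Function.Periodic (fun u => deriv γ u i * γ u j) (L/2) := by
    intro i j u; simp only [hsym u, hgsym u]; simp [PiLp.neg_apply]
  -- value of the half-period integral of p
  have hE1 : (L:ℝ)/2 + L/2 = L := by ring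
  have hE2 : (0:ℝ) + L/2 = L/2 := by ring
  have hIp0 : (∫ u in (0:ℝ)..(L/2), det2 (γ u) (deriv γ u)) = 2 * δstar := by
    have hadj := intervalIntegral.integral_add_adjacent_intervals (μ := volume)
      (hpc.intervalIntegrable 0 (L/2)) (hpc.intervalIntegrable (L/2) L)
    have h2nd := hpper.intervalIntegral_add_eq (L/2) 0
    rw [hE1, hE2] at h2nd
    rw [h2nd] at hadj
    rw [hδstar, ← hadj]; ring
  have hIps : ∀ s, (∫ u in s..(s + L/2), det2 (γ u) (deriv γ u)) = 2 * δstar := by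
    intro s
    have := hpper.intervalIntegral_add_eq s 0
    rw [hE2] at this; rw [this, hIp0]
  -- product FTC identities on [0, L/2]
  have hTsum : ∀ i j : Fin 2,
      (∫ u in (0:ℝ)..(L/2), (deriv γ u i * γ u j + γ u i * deriv γ u j)) = 0 := by
    intro i j
    rw [intervalIntegral.integral_eq_sub_of_hasDerivAt
      (f := fun u => γ u i * γ u j)
      (fun x _ => (hderivi i x).mul (hderivi j x))
      (((hgi i).mul (hci j)).add ((hci i).mul (hgi j)) |>.intervalIntegrable _ _)]
    rw [hL2]; simp [PiLp.neg_apply]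
  have hTdiag : ∀ i : Fin 2, (∫ u in (0:ℝ)..(L/2), deriv γ u i * γ u i) = 0 := by
    intro i
    have h := hTsum i i
    rw [intervalIntegral.integral_congr (g := fun u => 2 * (deriv γ u i * γ u i))
      (fun u _ => by ring)] at h
    rw [intervalIntegral.integral_const_mul] at h
    linarith
  have hsplit01 := intervalIntegral.integral_add (μ := volume)
    (((hgi 0).mul (hci 1)).intervalIntegrable (0:ℝ) (L/2))
    (((hci 0).mul (hgi 1)).intervalIntegrable (0:ℝ) (L/2))
  have h01 := hTsum 0 1
  simp only [Pi.mul_apply] at hsplit01; rw [hsplit01] at h01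
  have hcomm : (∫ u in (0:ℝ)..(L/2), γ u 0 * deriv γ u 1)
      = ∫ u in (0:ℝ)..(L/2), deriv γ u 1 * γ u 0 :=
    intervalIntegral.integral_congr (fun u _ => by ring)
  rw [hcomm] at h01
  -- difference identity : ∫ p = X - Y
  have hdiff : (∫ u in (0:ℝ)..(L/2), deriv γ u 1 * γ u 0)
      - (∫ u in (0:ℝ)..(L/2), deriv γ u 0 * γ u 1) = 2 * δstar := by
    have hs := intervalIntegral.integral_sub (μ := volume)
      (((hgi 1).mul (hci 0)).intervalIntegrable (0:ℝ) (L/2))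
      (((hgi 0).mul (hci 1)).intervalIntegrable (0:ℝ) (L/2))
    simp only [Pi.mul_apply] at hs; rw [← hs]
    rw [intervalIntegral.integral_congr (g := fun u => det2 (γ u) (deriv γ u))
      (fun u _ => by simp only [det2]; ring)]
    exact hIp0
  have hX : (∫ u in (0:ℝ)..(L/2), deriv γ u 1 * γ u 0) = δstar := by linarith
  have hY : (∫ u in (0:ℝ)..(L/2), deriv γ u 0 * γ u 1) = -δstar := by linarith
  have htrans : ∀ (i j : Fin 2) (s : ℝ), (∫ u in s..(s + L/2), deriv γ u i * γ u j)
      = ∫ u in (0:ℝ)..(L/2), deriv γ u i * γ u j := by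
    intro i j s
    have := (hTper i j).intervalIntegral_add_eq s 0
    rwa [hE2] at this
  exact ⟨hIps,
    fun s => by rw [htrans 1 0 s, hX],
    fun s => by rw [htrans 0 1 s, hY],
    fun s => by rw [htrans 0 0 s, hTdiag 0],
    fun s => by rw [htrans 1 1 s, hTdiag 1]⟩

lemma stage1 (γ : ℝ → R2) (L δstar : ℝ)
    (hdγ : Differentiable ℝ γ) (hgc : Continuous (deriv γ))
    (hsym : ∀ s, γ (s + L/2) = -γ s)
    (hIps : ∀ s, (∫ u in s..(s + L/2), det2 (γ u) (deriv γ u)) = 2 * δstar)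
    (hT10 : ∀ s, (∫ u in s..(s + L/2), deriv γ u 1 * γ u 0) = δstar)
    (hT01 : ∀ s, (∫ u in s..(s + L/2), deriv γ u 0 * γ u 1) = -δstar)
    (hT00 : ∀ s, (∫ u in s..(s + L/2), deriv γ u 0 * γ u 0) = 0)
    (hT11 : ∀ s, (∫ u in s..(s + L/2), deriv γ u 1 * γ u 1) = 0)
    (s : ℝ) :
    (∫ u in s..(s + L/2), det2 (γ u - γ s) (deriv γ u) • (γ u - γ s))
      = curveA γ L s - (3*δstar) • γ s := by
  rw [curveA]
  have hγc : Continuous γ := hdγ.continuous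
  have hci : ∀ i : Fin 2, Continuous fun u => γ u i := fun i =>
    ((EuclideanSpace.proj (𝕜 := ℝ) i).continuous.comp hγc : _)
  have hgi : ∀ i : Fin 2, Continuous fun u => deriv γ u i := fun i =>
    ((EuclideanSpace.proj (𝕜 := ℝ) i).continuous.comp hgc : _)
  have hpc : Continuous fun u => det2 (γ u) (deriv γ u) :=
    (((hci 0).mul (hgi 1)).sub ((hci 1).mul (hgi 0)) : _)
  have hderivi : ∀ (i : Fin 2) (x : ℝ), HasDerivAt (fun u => γ u i) (deriv γ x i) x := fun i x =>
    (EuclideanSpace.proj (𝕜:=ℝ) i).hasFDerivAt.comp_hasDerivAt x (hdγ x).hasDerivAt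
  have hGj : ∀ (j : Fin 2), (∫ u in s..(s + L/2), deriv γ u j) = -(2 * γ s j) := by
    intro j
    rw [intervalIntegral.integral_eq_sub_of_hasDerivAt (fun x _ => hderivi j x)
      ((hgi j).intervalIntegrable _ _), hsym s]
    simp [PiLp.neg_apply]; ring
  -- continuity of the full integrand pieces
  have hsubc : Continuous fun u => γ u - γ s := hγc.sub continuous_const
  have hsubi : ∀ i : Fin 2, Continuous fun u => (γ u - γ s) i := fun i =>
    ((EuclideanSpace.proj (𝕜 := ℝ) i).continuous.comp hsubc : _)
  have hdetc : Continuous fun u => det2 (γ u - γ s) (deriv γ u) :=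
    (((hsubi 0).mul (hgi 1)).sub ((hsubi 1).mul (hgi 0)) : _)
  have hGc : Continuous fun u => det2 (γ u - γ s) (deriv γ u) • (γ u - γ s) :=
    hdetc.smul hsubc
  have havc : Continuous fun u => det2 (γ u) (deriv γ u) • γ u := hpc.smul hγc
  -- component computation
  have hcomp : ∀ (i : Fin 2) (T1 T0 : ℝ)
      (h1 : (∫ u in s..(s + L/2), deriv γ u 1 * γ u i) = T1)
      (h0 : (∫ u in s..(s + L/2), deriv γ u 0 * γ u i) = T0),
      (∫ u in s..(s + L/2), det2 (γ u - γ s) (deriv γ u) * (γ u i - γ s i))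
        = (∫ u in s..(s + L/2), det2 (γ u) (deriv γ u) * γ u i)
          - γ s i * (2*δstar) - γ s 0 * T1 + γ s 1 * T0
          + (γ s 0 * γ s i) * (-(2 * γ s 1)) - (γ s 1 * γ s i) * (-(2 * γ s 0)) := by
    intro i T1 T0 h1 h0
    have hexp : ∀ u : ℝ, det2 (γ u - γ s) (deriv γ u) * (γ u i - γ s i)
        = det2 (γ u) (deriv γ u) * γ u i
          - γ s i * (det2 (γ u) (deriv γ u))
          - γ s 0 * (deriv γ u 1 * γ u i) + γ s 1 * (deriv γ u 0 * γ u i)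
          + (γ s 0 * γ s i) * deriv γ u 1 - (γ s 1 * γ s i) * deriv γ u 0 := by
      intro u
      simp only [det2, PiLp.sub_apply]
      ring
    rw [intervalIntegral.integral_congr (g := fun u =>
      det2 (γ u) (deriv γ u) * γ u i
        - γ s i * (det2 (γ u) (deriv γ u))
        - γ s 0 * (deriv γ u 1 * γ u i) + γ s 1 * (deriv γ u 0 * γ u i)
        + (γ s 0 * γ s i) * deriv γ u 1 - (γ s 1 * γ s i) * deriv γ u 0)
      (fun u _ => hexp u)]
    have I1 : IntervalIntegrable (fun u => det2 (γ u) (deriv γ u) * γ u i) volume s (s+L/2) :=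
      (hpc.mul (hci i)).intervalIntegrable _ _
    have I2 : IntervalIntegrable (fun u => γ s i * (det2 (γ u) (deriv γ u))) volume s (s+L/2) :=
      (continuous_const.mul hpc).intervalIntegrable _ _
    have I3 : IntervalIntegrable (fun u => γ s 0 * (deriv γ u 1 * γ u i)) volume s (s+L/2) :=
      (continuous_const.mul ((hgi 1).mul (hci i))).intervalIntegrable _ _
    have I4 : IntervalIntegrable (fun u => γ s 1 * (deriv γ u 0 * γ u i)) volume s (s+L/2) :=
      (continuous_const.mul ((hgi 0).mul (hci i))).intervalIntegrable _ _
    have I5 : IntervalIntegrable (fun u => (γ s 0 * γ s i) * deriv γ u 1) volume s (s+L/2) :=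
      (continuous_const.mul (hgi 1)).intervalIntegrable _ _
    have I6 : IntervalIntegrable (fun u => (γ s 1 * γ s i) * deriv γ u 0) volume s (s+L/2) :=
      (continuous_const.mul (hgi 0)).intervalIntegrable _ _
    rw [intervalIntegral.integral_sub ((((I1.sub I2).sub I3).add I4).add I5) I6,
        intervalIntegral.integral_add (((I1.sub I2).sub I3).add I4) I5,
        intervalIntegral.integral_add ((I1.sub I2).sub I3) I4,
        intervalIntegral.integral_sub (I1.sub I2) I3,
        intervalIntegral.integral_sub I1 I2,
        intervalIntegral.integral_const_mul, intervalIntegral.integral_const_mul,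
        intervalIntegral.integral_const_mul, intervalIntegral.integral_const_mul,
        intervalIntegral.integral_const_mul,
        hIps s, h1, h0, hGj 0, hGj 1]
  ext i
  have hi : i = 0 ∨ i = 1 := by fin_cases i <;> simp
  have e1 := integral_comp_R2 _ hGc s (s+L/2) i
  have e2 := integral_comp_R2 _ havc s (s+L/2) i
  simp only [PiLp.sub_apply, PiLp.smul_apply, smul_eq_mul] at e1 e2 ⊢
  rw [e1, e2]
  obtain rfl | rfl := hi
  · rw [hcomp 0 δstar 0 (hT10 s) (hT00 s)]; ring
  · rw [hcomp 1 0 (-δstar) (hT11 s) (hT01 s)]; ring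

lemma stage3 (γ : ℝ → R2) (L δstar lam : ℝ) (z : R2)
    (hδpos : 0 < δstar) (hlam : 0 < lam)
    (hdγ : Differentiable ℝ γ) (hdg : Differentiable ℝ (deriv γ))
    (hpos : ∀ s, 0 < det2 (γ s) (deriv γ s))
    (hsym : ∀ s, γ (s + L/2) = -γ s)
    (hgsym : ∀ s, deriv γ (s + L/2) = -(deriv γ s))
    (hbuoy : ∀ s, buoyCurve γ (fun s => s + L/2) δstar s = (1/(3*δstar)) • curveA γ L s)
    (hhom : ∀ s, buoyCurve γ (fun s => s + L/2) δstar s =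
      z + lam • ((1/(2 * det2 (γ s) (deriv γ s))) • deriv γ s - z)) :
    (∀ s, curveA γ L s
      = ((3*δstar) * (lam * (1/(2 * det2 (γ s) (deriv γ s))))) • deriv γ s)
    ∧ (∀ s, deriv γ s = ((2/(3*δstar*lam)) * det2 (γ s) (deriv γ s)) • curveA γ L s) := by
  have hγc : Continuous γ := hdγ.continuous
  have hgc : Continuous (deriv γ) := hdg.continuous
  have hci : ∀ i : Fin 2, Continuous fun u => γ u i := fun i =>
    ((EuclideanSpace.proj (𝕜 := ℝ) i).continuous.comp hγc : _)
  have hgi : ∀ i : Fin 2, Continuous fun u => deriv γ u i := fun i =>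
    ((EuclideanSpace.proj (𝕜 := ℝ) i).continuous.comp hgc : _)
  have hpc : Continuous fun u => det2 (γ u) (deriv γ u) :=
    (((hci 0).mul (hgi 1)).sub ((hci 1).mul (hgi 0)) : _)
  have havc : Continuous fun u => det2 (γ u) (deriv γ u) • γ u := hpc.smul hγc
  have hpsym : ∀ s, det2 (γ (s + L/2)) (deriv γ (s + L/2)) = det2 (γ s) (deriv γ s) := by
    intro s; rw [hsym s, hgsym s, det2_neg_neg]
  have hhom' : ∀ s, (1/(3*δstar)) • curveA γ L s =
      z + lam • ((1/(2 * det2 (γ s) (deriv γ s))) • deriv γ s - z) := by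
    intro s; rw [← hbuoy s]; exact hhom s
  have hAanti : ∀ s, curveA γ L (s + L/2) = -curveA γ L s := by
    intro s
    unfold curveA
    have hcv := intervalIntegral.integral_comp_add_right
      (a := s) (b := s + L/2) (fun u => det2 (γ u) (deriv γ u) • γ u) (L/2)
    rw [← hcv]
    rw [intervalIntegral.integral_congr
      (g := fun u => -(det2 (γ u) (deriv γ u) • γ u))
      (fun u _ => by
        show det2 (γ (u + L/2)) (deriv γ (u + L/2)) • γ (u + L/2) = _
        rw [hpsym u, hsym u, smul_neg])]
    rw [intervalIntegral.integral_neg]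
  -- eliminate z
  have hz : z = lam • z := by
    have h1 := hhom' 0
    have h2 := hhom' (0 + L/2)
    rw [hAanti 0, hpsym 0, hgsym 0, smul_neg, smul_neg] at h2
    have h3 := congrArg₂ (fun x y : R2 => x + y) h1 h2
    simp only [add_neg_cancel] at h3
    have h4 : (z + lam • ((1/(2 * det2 (γ 0) (deriv γ 0))) • deriv γ 0 - z)) +
        (z + lam • (-((1/(2 * det2 (γ 0) (deriv γ 0))) • deriv γ 0) - z))
        = (2:ℝ) • (z - lam • z) := by module
    rw [h4] at h3
    have h5 : z - lam • z = 0 := by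
      have := h3.symm
      rcases smul_eq_zero.mp this with h | h
      · norm_num at h
      · exact h
    have := sub_eq_zero.mp h5
    exact this
  have hr : ∀ s, curveA γ L s
      = ((3*δstar) * (lam * (1/(2 * det2 (γ s) (deriv γ s))))) • deriv γ s := by
    intro s
    have h1 := hhom' s
    have h1' : (1/(3*δstar)) • curveA γ L s
        = lam • ((1/(2 * det2 (γ s) (deriv γ s))) • deriv γ s) := by
      rw [h1, smul_sub, ← hz]; abel
    have h2 := congrArg (fun v : R2 => (3*δstar) • v) h1'
    simp only [smul_smul] at h2
    have h3 : (3*δstar) * (1/(3*δstar)) = 1 := by field_simp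
    rw [h3, one_smul] at h2
    exact h2
  refine ⟨hr, fun s => ?_⟩
  rw [hr s, smul_smul]
  have hps := (hpos s).ne'
  have hcoef : (2/(3*δstar*lam)) * det2 (γ s) (deriv γ s)
      * ((3*δstar) * (lam * (1/(2 * det2 (γ s) (deriv γ s))))) = 1 := by
    field_simp
  rw [hcoef, one_smul]

lemma stage4 (γ : ℝ → R2) (L δstar lam : ℝ) (hL : 0 < L)
    (hδpos : 0 < δstar) (hlam : 0 < lam)
    (hdγ : Differentiable ℝ γ) (hdg : Differentiable ℝ (deriv γ))
    (hpos : ∀ s, 0 < det2 (γ s) (deriv γ s))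
    (hsym : ∀ s, γ (s + L/2) = -γ s)
    (hgsym : ∀ s, deriv γ (s + L/2) = -(deriv γ s))
    (hδstar : δstar = (1/4) * ∫ u in (0:ℝ)..L, det2 (γ u) (deriv γ u))
    (hrAll : ∀ s, curveA γ L s
      = ((3*δstar) * (lam * (1/(2 * det2 (γ s) (deriv γ s))))) • deriv γ s)
    (hgA : ∀ s, deriv γ s = ((2/(3*δstar*lam)) * det2 (γ s) (deriv γ s)) • curveA γ L s) :
    ∃ (T : R2 ≃ₗ[ℝ] R2) (b : R2),
      Set.range γ = (fun x => T x + b) '' Metric.sphere (0:R2) 1 := by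
  have hγc : Continuous γ := hdγ.continuous
  have hgc : Continuous (deriv γ) := hdg.continuous
  have hci : ∀ i : Fin 2, Continuous fun u => γ u i := fun i =>
    ((EuclideanSpace.proj (𝕜 := ℝ) i).continuous.comp hγc : _)
  have hgi : ∀ i : Fin 2, Continuous fun u => deriv γ u i := fun i =>
    ((EuclideanSpace.proj (𝕜 := ℝ) i).continuous.comp hgc : _)
  have hpc : Continuous fun u => det2 (γ u) (deriv γ u) :=
    (((hci 0).mul (hgi 1)).sub ((hci 1).mul (hgi 0)) : _)
  have havc : Continuous fun u => det2 (γ u) (deriv γ u) • γ u := hpc.smul hγc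
  have hpsym : ∀ s, det2 (γ (s + L/2)) (deriv γ (s + L/2)) = det2 (γ s) (deriv γ s) := by
    intro s; rw [hsym s, hgsym s, det2_neg_neg]
  -- derivative of A
  have hFd : ∀ x : ℝ, HasDerivAt (fun y => ∫ u in (0:ℝ)..y, det2 (γ u) (deriv γ u) • γ u)
      (det2 (γ x) (deriv γ x) • γ x) x := hasDerivAt_primitive _ havc
  have hfun : curveA γ L = fun s' =>
      (∫ u in (0:ℝ)..(s' + L/2), det2 (γ u) (deriv γ u) • γ u)
        - ∫ u in (0:ℝ)..s', det2 (γ u) (deriv γ u) • γ u := by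
    funext s'
    exact eq_sub_of_add_eq' (intervalIntegral.integral_add_adjacent_intervals (μ := volume)
      (havc.intervalIntegrable 0 s') (havc.intervalIntegrable s' (s' + L/2)))
  have hA' : ∀ x : ℝ, HasDerivAt (curveA γ L) ((-(2 * det2 (γ x) (deriv γ x))) • γ x) x := by
    intro x
    have hshift : HasDerivAt (fun y => ∫ u in (0:ℝ)..(y + L/2), det2 (γ u) (deriv γ u) • γ u)
        (det2 (γ (x + L/2)) (deriv γ (x + L/2)) • γ (x + L/2)) x := by
      simpa [Function.comp_def] using (hFd (x + L/2)).scomp x ((hasDerivAt_id x).add_const (L/2))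
    have h := hshift.sub (hFd x)
    simp only [Pi.sub_def] at h; rw [← hfun] at h
    have hval : det2 (γ (x + L/2)) (deriv γ (x + L/2)) • γ (x + L/2)
        - det2 (γ x) (deriv γ x) • γ x = (-(2 * det2 (γ x) (deriv γ x))) • γ x := by
      rw [hpsym x, hsym x]; module
    rwa [hval] at h
  -- the ODE constants
  set k : ℝ := Real.sqrt (4/(3*δstar*lam)) with hkdef
  have hkpos : 0 < k := Real.sqrt_pos.mpr (by positivity)
  have hk2 : k * k = 4/(3*δstar*lam) := Real.mul_self_sqrt (by positivity)
  have hτd : ∀ x : ℝ, HasDerivAt (fun s => ∫ u in (0:ℝ)..s, det2 (γ u) (deriv γ u))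
      (det2 (γ x) (deriv γ x)) x := hasDerivAt_primitive _ hpc
  have hφd : ∀ x : ℝ, HasDerivAt (phiF γ k) (k * det2 (γ x) (deriv γ x)) x := fun x =>
    (hτd x).const_mul k
  -- conserved quantities
  have hVd : ∀ x : ℝ, HasDerivAt (vF γ L k) 0 x := by
    intro x
    have hcos : HasDerivAt (fun y => Real.cos (phiF γ k y))
        (-Real.sin (phiF γ k x) * (k * det2 (γ x) (deriv γ x))) x :=
      (Real.hasDerivAt_cos (phiF γ k x)).comp x (hφd x)
    have hsin : HasDerivAt (fun y => Real.sin (phiF γ k y))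
        (Real.cos (phiF γ k x) * (k * det2 (γ x) (deriv γ x))) x :=
      (Real.hasDerivAt_sin (phiF γ k x)).comp x (hφd x)
    have h1 := hcos.smul (hdγ x).hasDerivAt
    have h2 := (hsin.smul (hA' x)).const_smul (k/2)
    have h3 := h1.sub h2
    have key : ∀ P : ℝ, deriv γ x = ((2/(3*δstar*lam)) * P) • curveA γ L x →
        (Real.cos (phiF γ k x) • deriv γ x
          + (-Real.sin (phiF γ k x) * (k * P)) • γ x)
          - (k/2) • (Real.sin (phiF γ k x) • ((-(2 * P)) • γ x)
            + (Real.cos (phiF γ k x) * (k * P)) • curveA γ L x)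
          = 0 := by
      intro P hP
      rw [hP]
      match_scalars
      · linear_combination (-(Real.cos (phiF γ k x) * P / 2)) * hk2
      · ring
    rw [key _ (hgA x)] at h3
    exact h3
  have hWd : ∀ x : ℝ, HasDerivAt (wF γ L k) 0 x := by
    intro x
    have hcos : HasDerivAt (fun y => Real.cos (phiF γ k y))
        (-Real.sin (phiF γ k x) * (k * det2 (γ x) (deriv γ x))) x :=
      (Real.hasDerivAt_cos (phiF γ k x)).comp x (hφd x)
    have hsin : HasDerivAt (fun y => Real.sin (phiF γ k y))
        (Real.cos (phiF γ k x) * (k * det2 (γ x) (deriv γ x))) x :=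
      (Real.hasDerivAt_sin (phiF γ k x)).comp x (hφd x)
    have h1 := hsin.smul (hdγ x).hasDerivAt
    have h2 := (hcos.smul (hA' x)).const_smul (k/2)
    have h3 := h1.add h2
    have key : ∀ P : ℝ, deriv γ x = ((2/(3*δstar*lam)) * P) • curveA γ L x →
        (Real.sin (phiF γ k x) • deriv γ x
          + (Real.cos (phiF γ k x) * (k * P)) • γ x)
          + (k/2) • (Real.cos (phiF γ k x) • ((-(2 * P)) • γ x)
            + (-Real.sin (phiF γ k x) * (k * P)) • curveA γ L x)
          = 0 := by
      intro P hP
      rw [hP]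
      match_scalars
      · linear_combination (-(Real.sin (phiF γ k x) * P / 2)) * hk2
      · ring
    rw [key _ (hgA x)] at h3
    exact h3
  have hVconst : ∀ s, vF γ L k s = vF γ L k 0 := fun s =>
    is_const_of_deriv_eq_zero (fun x => (hVd x).differentiableAt)
      (fun x => (hVd x).deriv) s 0
  have hWconst : ∀ s, wF γ L k s = wF γ L k 0 := fun s =>
    is_const_of_deriv_eq_zero (fun x => (hWd x).differentiableAt)
      (fun x => (hWd x).deriv) s 0
  have hφ0 : phiF γ k 0 = 0 := by
    unfold phiF; rw [intervalIntegral.integral_same, mul_zero]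
  have hV0 : vF γ L k 0 = γ 0 := by
    unfold vF; rw [hφ0, Real.cos_zero, Real.sin_zero, one_smul, zero_smul, smul_zero, sub_zero]
  have hW0 : wF γ L k 0 = (k/2) • curveA γ L 0 := by
    unfold wF; rw [hφ0, Real.cos_zero, Real.sin_zero, one_smul, zero_smul, zero_add]
  have hrep : ∀ s, γ s = Real.cos (phiF γ k s) • γ 0
      + Real.sin (phiF γ k s) • ((k/2) • curveA γ L 0) := by
    intro s
    have hVW : Real.cos (phiF γ k s) • vF γ L k s + Real.sin (phiF γ k s) • wF γ L k s
        = γ s := by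
      unfold vF wF
      match_scalars
      · linear_combination Real.sin_sq_add_cos_sq (phiF γ k s)
      · ring
    rw [hVconst s, hWconst s, hV0, hW0] at hVW
    exact hVW.symm
  -- surjectivity of the phase
  have hτdiff : Differentiable ℝ (fun s => ∫ u in (0:ℝ)..s, det2 (γ u) (deriv γ u)) :=
    fun x => (hτd x).differentiableAt
  have hmono : StrictMono (fun s => ∫ u in (0:ℝ)..s, det2 (γ u) (deriv γ u)) :=
    strictMono_of_deriv_pos (fun x => by rw [(hτd x).deriv]; exact hpos x)
  have hpp2 : Function.Periodic (fun u => det2 (γ u) (deriv γ u)) (L/2) := fun u => hpsym u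
  have hppL : Function.Periodic (fun u => det2 (γ u) (deriv γ u)) L := by
    have := hpp2.add_period hpp2
    have e : L/2 + L/2 = L := by ring
    rwa [e] at this
  have hIL : (∫ u in (0:ℝ)..L, det2 (γ u) (deriv γ u)) = 4 * δstar := by
    rw [hδstar]; ring
  have hτadd : ∀ s, (∫ u in (0:ℝ)..(s+L), det2 (γ u) (deriv γ u))
      = (∫ u in (0:ℝ)..s, det2 (γ u) (deriv γ u)) + 4*δstar := by
    intro s
    have hadj := intervalIntegral.integral_add_adjacent_intervals (μ := volume)
      (hpc.intervalIntegrable 0 s) (hpc.intervalIntegrable s (s+L))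
    have hper' := hppL.intervalIntegral_add_eq s 0
    rw [zero_add, hIL] at hper'
    linarith
  have hτ0 : (∫ u in (0:ℝ)..(0:ℝ), det2 (γ u) (deriv γ u)) = 0 :=
    intervalIntegral.integral_same
  have hnat : ∀ n : ℕ, (∫ u in (0:ℝ)..((n:ℝ) * L), det2 (γ u) (deriv γ u))
      = n * (4*δstar) := by
    intro n
    induction n with
    | zero => simpa using hτ0
    | succ m ih =>
        have e : ((m:ℝ)+1) * L = (m:ℝ)*L + L := by ring
        push_cast
        rw [e, hτadd, ih]; ring
  have hnat' : ∀ n : ℕ, (∫ u in (0:ℝ)..(-((n:ℝ) * L)), det2 (γ u) (deriv γ u))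
      = -((n:ℝ) * (4*δstar)) := by
    intro n
    induction n with
    | zero => simpa using hτ0
    | succ m ih =>
        have e : -((m:ℝ) * L) = -(((m:ℝ)+1) * L) + L := by ring
        rw [e, hτadd] at ih
        push_cast
        linarith
  have h4δ : 0 < 4*δstar := by linarith
  have htop : Filter.Tendsto (fun s => ∫ u in (0:ℝ)..s, det2 (γ u) (deriv γ u))
      Filter.atTop Filter.atTop := by
    apply Filter.tendsto_atTop_atTop_of_monotone hmono.monotone
    intro b
    obtain ⟨n, hn⟩ := exists_nat_ge (b / (4*δstar))
    refine ⟨(n:ℝ) * L, ?_⟩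
    rw [hnat n]
    calc b = (b / (4*δstar)) * (4*δstar) := by field_simp
    _ ≤ (n:ℝ) * (4*δstar) := by nlinarith
  have hbot : Filter.Tendsto (fun s => ∫ u in (0:ℝ)..s, det2 (γ u) (deriv γ u))
      Filter.atBot Filter.atBot := by
    apply Filter.tendsto_atBot_atBot_of_monotone hmono.monotone
    intro b
    obtain ⟨n, hn⟩ := exists_nat_ge ((-b) / (4*δstar))
    refine ⟨-((n:ℝ) * L), ?_⟩
    rw [hnat' n]
    have : -b ≤ (n:ℝ) * (4*δstar) := by
      calc -b = ((-b) / (4*δstar)) * (4*δstar) := by field_simp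
      _ ≤ (n:ℝ) * (4*δstar) := by nlinarith
    linarith
  have hφcont : Continuous (phiF γ k) := continuous_const.mul hτdiff.continuous
  have hφtop : Filter.Tendsto (phiF γ k) Filter.atTop Filter.atTop :=
    Filter.Tendsto.const_mul_atTop hkpos htop
  have hφbot : Filter.Tendsto (phiF γ k) Filter.atBot Filter.atBot :=
    Filter.Tendsto.const_mul_atBot hkpos hbot
  have hφsurj : Function.Surjective (phiF γ k) := hφcont.surjective hφtop hφbot
  -- the linear equivalence
  have hp0 := hpos 0
  have hdetVW : det2 (γ 0) ((k/2) • curveA γ L 0) = 3*δstar*lam*k/4 := by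
    rw [hrAll 0, det2_smul_right, det2_smul_right]
    field_simp
    ring
  have hDpos : (0:ℝ) < 3*δstar*lam*k/4 := by
    have := mul_pos (mul_pos (mul_pos (by norm_num : (0:ℝ) < 3) hδpos) hlam) hkpos
    linarith
  set W0 : R2 := (k/2) • curveA γ L 0 with hW0def
  let M : R2 →ₗ[ℝ] R2 :=
    { toFun := fun x => x 0 • γ 0 + x 1 • W0
      map_add' := by
        intro x y
        simp only [PiLp.add_apply]
        module
      map_smul' := by
        intro c x
        simp only [PiLp.smul_apply, smul_eq_mul, RingHom.id_apply]
        module }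
  have hMapply : ∀ x : R2, M x = x 0 • γ 0 + x 1 • W0 := fun x => rfl
  have hMinj : Function.Injective M := by
    rw [injective_iff_map_eq_zero]
    intro x hx
    rw [hMapply] at hx
    have hdne : det2 (γ 0) W0 ≠ 0 := by rw [hdetVW]; exact ne_of_gt hDpos
    have d1 := congrArg (fun v : R2 => det2 v W0) hx
    have d2 := congrArg (fun v : R2 => det2 (γ 0) v) hx
    simp only [det2, PiLp.add_apply, PiLp.smul_apply, PiLp.zero_apply, smul_eq_mul,
      zero_mul, sub_zero, mul_zero, sub_self] at d1 d2
    have hx0 : x 0 * det2 (γ 0) W0 = 0 := by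
      simp only [det2]; linear_combination d1
    have hx1 : x 1 * det2 (γ 0) W0 = 0 := by
      simp only [det2]; linear_combination d2
    have hx0' : x 0 = 0 := by
      rcases mul_eq_zero.mp hx0 with h | h
      · exact h
      · exact absurd h hdne
    have hx1' : x 1 = 0 := by
      rcases mul_eq_zero.mp hx1 with h | h
      · exact h
      · exact absurd h hdne
    ext i
    have hi : i = 0 ∨ i = 1 := by fin_cases i <;> simp
    obtain rfl | rfl := hi
    · simpa using hx0'
    · simpa using hx1'
  have hbij : Function.Bijective M := ⟨hMinj, (LinearMap.injective_iff_surjective).mp hMinj⟩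
  refine ⟨LinearEquiv.ofBijective M hbij, 0, ?_⟩
  ext x
  simp only [Set.mem_range, Set.mem_image, add_zero]
  constructor
  · rintro ⟨s, rfl⟩
    refine ⟨(WithLp.equiv 2 (Fin 2 → ℝ)).symm ![Real.cos (phiF γ k s), Real.sin (phiF γ k s)],
      ?_, ?_⟩
    · rw [mem_sphere_zero_iff_norm, EuclideanSpace.norm_eq]
      simp only [WithLp.equiv_symm_apply, PiLp.toLp_apply, Fin.sum_univ_two, Matrix.cons_val_zero,
        Matrix.cons_val_one, Matrix.head_cons, Real.norm_eq_abs, sq_abs]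
      rw [Real.cos_sq_add_sin_sq]
      exact Real.sqrt_one
    · rw [LinearEquiv.ofBijective_apply, hMapply]
      simp only [WithLp.equiv_symm_apply, PiLp.toLp_apply, Matrix.cons_val_zero, Matrix.cons_val_one,
        Matrix.head_cons]
      exact (hrep s).symm
  · rintro ⟨y, hy, rfl⟩
    rw [mem_sphere_zero_iff_norm, EuclideanSpace.norm_eq] at hy
    simp only [Fin.sum_univ_two, Real.norm_eq_abs, sq_abs] at hy
    have hy1 : y 0 ^ 2 + y 1 ^ 2 = 1 := by
      have h2 := congrArg (fun t : ℝ => t^2) hy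
      simpa [Real.sq_sqrt (by positivity : (0:ℝ) ≤ y 0 ^2 + y 1 ^2)] using h2
    have habs : ‖((y 0 : ℂ) + (y 1 : ℂ) * Complex.I)‖ = 1 := by
      rw [Complex.norm_add_mul_I, hy1]; exact Real.sqrt_one
    have hne : ((y 0 : ℂ) + (y 1 : ℂ) * Complex.I) ≠ 0 := by
      intro h; rw [h] at habs; simp at habs
    have hct : Real.cos ((y 0 : ℂ) + (y 1 : ℂ) * Complex.I).arg = y 0 := by
      rw [Complex.cos_arg hne, habs]; simp
    have hst : Real.sin ((y 0 : ℂ) + (y 1 : ℂ) * Complex.I).arg = y 1 := by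
      rw [Complex.sin_arg, habs]; simp
    obtain ⟨s, hs⟩ := hφsurj ((y 0 : ℂ) + (y 1 : ℂ) * Complex.I).arg
    refine ⟨s, ?_⟩
    rw [LinearEquiv.ofBijective_apply, hMapply, hrep s, hs, hct, hst]


/-- for an origin-symmetric body, if the buoyancy curve for density one half
is homothetic to the boundary of the polar of the intersection body, then `K` is an ellipse. -/
theorem stmt16
    (γ : ℝ → R2) (L : ℝ) (hL : 0 < L)
    (hγ : ContDiff ℝ 2 γ)
    (hper : ∀ s, γ (s + L) = γ s)
    (hreg : ∀ s, deriv γ s ≠ 0)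
    (hinj : Set.InjOn γ (Set.Ico 0 L))
    (hsym : ∀ s, γ (s + L/2) = -γ s)
    (hpos : ∀ s, 0 < det2 (γ s) (deriv γ s))
    (K : Set R2) (hKconv : Convex ℝ K) (hKcomp : IsCompact K)
    (hKint : (interior K).Nonempty) (hKbd : frontier K = Set.range γ)
    (hKsym : -K = K)
    (δstar : ℝ) (hδstar : δstar = (1/4) * ∫ u in (0:ℝ)..L, det2 (γ u) (deriv γ u))
    (z : R2) (lam : ℝ) (hlam : 0 < lam)
    (hhom : ∀ s, buoyCurve γ (fun s => s + L/2) δstar s =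
      z + lam • ((1/(2 * det2 (γ s) (deriv γ s))) • deriv γ s - z)) :
    ∃ (T : R2 ≃ₗ[ℝ] R2) (b : R2),
      Set.range γ = (fun x => T x + b) '' Metric.sphere (0:R2) 1 := by
  have hdγ : Differentiable ℝ γ := hγ.differentiable (by norm_num)
  have hdg : Differentiable ℝ (deriv γ) := by
    have h2 : ContDiff ℝ ((1:WithTop ℕ∞) + 1) γ := by
      have e : ((1:WithTop ℕ∞) + 1) = 2 := by norm_num
      rw [e]; exact hγ
    exact (contDiff_succ_iff_deriv.mp h2).2.2.differentiable one_ne_zero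
  have hγc : Continuous γ := hdγ.continuous
  have hgc : Continuous (deriv γ) := hdg.continuous
  have hci : ∀ i : Fin 2, Continuous fun u => γ u i := fun i =>
    ((EuclideanSpace.proj (𝕜 := ℝ) i).continuous.comp hγc : _)
  have hgi : ∀ i : Fin 2, Continuous fun u => deriv γ u i := fun i =>
    ((EuclideanSpace.proj (𝕜 := ℝ) i).continuous.comp hgc : _)
  have hpc : Continuous fun u => det2 (γ u) (deriv γ u) :=
    (((hci 0).mul (hgi 1)).sub ((hci 1).mul (hgi 0)) : _)
  have hgsym : ∀ s, deriv γ (s + L/2) = -(deriv γ s) := by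
    intro s
    have h1 : (fun x => γ (x + L/2)) = fun x => -(γ x) := funext hsym
    have h2 : deriv (fun x => γ (x + L/2)) s = deriv γ (s + L/2) := deriv_comp_add_const γ (L/2) s
    rw [h1] at h2
    rw [← h2, deriv.fun_neg]
  have hδpos : 0 < δstar := by
    have hI : 0 < ∫ u in (0:ℝ)..L, det2 (γ u) (deriv γ u) :=
      intervalIntegral.intervalIntegral_pos_of_pos (hpc.intervalIntegrable 0 L) hpos hL
    rw [hδstar]; linarith
  obtain ⟨hIps, hT10, hT01, hT00, hT11⟩ := stage2 γ L δstar hL hdγ hdg hsym hδstar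
  have hIm := stage1 γ L δstar hdγ hgc hsym hIps hT10 hT01 hT00 hT11
  have hbuoy : ∀ s, buoyCurve γ (fun s => s + L/2) δstar s = (1/(3*δstar)) • curveA γ L s := by
    intro s
    show γ s + (1/(3*δstar)) •
      (∫ u in s..(s + L/2), det2 (γ u - γ s) (deriv γ u) • (γ u - γ s)) = _
    rw [hIm s, smul_sub, smul_smul]
    have h1 : (1/(3*δstar)) * (3*δstar) = 1 := by field_simp
    rw [h1, one_smul]
    abel
  obtain ⟨hrAll, hgA⟩ := stage3 γ L δstar lam z hδpos hlam hdγ hdg hpos hsym hgsym hbuoy hhom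
  exact stage4 γ L δstar lam hL hδpos hlam hdγ hdg hpos hsym hgsym hδstar hrAll hgA
end
end

section
/- Let K ⊂ ℝ² be an origin-symmetric convex body whose boundary is parametrized by an L-periodic regular curve γ : ℝ → ℝ² of class C², injective on [0,L), positively oriented, with γ(s + L/2) = −γ(s), det(γ(s), γ'(s)) > 0 and det(γ'(s), γ''(s)) > 0 for all s. If the quantity det(γ(s), γ'(s))³ / det(γ'(s), γ''(s)) is constant in s, then the image of γ is an ellipse centered at the origin. (This is Petty's characterization: the class F₂ of convex bodies whose curvature function is a constant multiple of h^{−3}, h the support function, consists only of ellipses.) -/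
open Real MeasureTheory intervalIntegral

noncomputable section

section Aux

lemma ellipse_invariant (x y x' y' x'' y'' : ℝ → ℝ) (C : ℝ)
    (hx : ∀ s, HasDerivAt x (x' s) s) (hy : ∀ s, HasDerivAt y (y' s) s)
    (hx' : ∀ s, HasDerivAt x' (x'' s) s) (hy' : ∀ s, HasDerivAt y' (y'' s) s)
    (hp : ∀ s, 0 < x s * y' s - y s * x' s)
    (hq : ∀ s, 0 < x' s * y'' s - y' s * x'' s)
    (hC : ∀ s, C * (x' s * y'' s - y' s * x'' s) = (x s * y' s - y s * x' s)^3) :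
    ∃ α β δ : ℝ, 0 < C ∧ 0 < δ ∧ α*δ - β^2 = C ∧
      ∀ s, δ * (x s)^2 - 2*β*(x s)*(y s) + α*(y s)^2 = C := by
  have hC0 : 0 < C := by
    have h := hC 0
    nlinarith [hq 0, hp 0, pow_pos (hp 0) 3]
  have hpne : ∀ s, (x s * y' s - y s * x' s) ≠ 0 := fun s => ne_of_gt (hp s)
  have hpD : ∀ s, HasDerivAt (fun s => x s * y' s - y s * x' s) (x s * y'' s - y s * x'' s) s := by
    intro s
    have := ((hx s).mul (hy' s)).sub ((hy s).mul (hx' s))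
    exact this.congr_deriv (by ring)
  have hF : ∀ s, HasDerivAt (fun s => (x s)^2 + C*(x' s)^2/(x s * y' s - y s * x' s)^2) 0 s := by
    intro s
    have hpns : (x s * y' s - y s * x' s) ≠ 0 := hpne s
    have h := ((hx s).pow 2).add
      ((((hx' s).pow 2).const_mul C).div ((hpD s).pow 2) (pow_ne_zero 2 hpns))
    refine h.congr_deriv ?_
    simp only [Pi.pow_apply, Pi.mul_apply, Nat.cast_ofNat]
    have h' : x s * y' s - x' s * y s ≠ 0 := by rwa [mul_comm (x' s)]
    have h'' : y' s * x s - y s * x' s ≠ 0 := by rwa [mul_comm (y' s)]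
    field_simp; ring_nf
    linear_combination (-2 * x s * x' s * (x s * y' s - y s * x' s)) * hC s
  have hG : ∀ s, HasDerivAt (fun s => x s * y s + C*(x' s * y' s)/(x s * y' s - y s * x' s)^2) 0 s := by
    intro s
    have hpns : (x s * y' s - y s * x' s) ≠ 0 := hpne s
    have h := ((hx s).mul (hy s)).add
      ((((hx' s).mul (hy' s)).const_mul C).div ((hpD s).pow 2) (pow_ne_zero 2 hpns))
    refine h.congr_deriv ?_
    simp only [Pi.pow_apply, Pi.mul_apply, Nat.cast_ofNat]
    have h' : x s * y' s - x' s * y s ≠ 0 := by rwa [mul_comm (x' s)]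
    have h'' : y' s * x s - y s * x' s ≠ 0 := by rwa [mul_comm (y' s)]
    field_simp; ring_nf
    linear_combination (-(x' s * y s + x s * y' s) * (x s * y' s - y s * x' s)) * hC s
  have hH : ∀ s, HasDerivAt (fun s => (y s)^2 + C*(y' s)^2/(x s * y' s - y s * x' s)^2) 0 s := by
    intro s
    have hpns : (x s * y' s - y s * x' s) ≠ 0 := hpne s
    have h := ((hy s).pow 2).add
      ((((hy' s).pow 2).const_mul C).div ((hpD s).pow 2) (pow_ne_zero 2 hpns))
    refine h.congr_deriv ?_
    simp only [Pi.pow_apply, Pi.mul_apply, Nat.cast_ofNat]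
    have h' : x s * y' s - x' s * y s ≠ 0 := by rwa [mul_comm (x' s)]
    have h'' : y' s * x s - y s * x' s ≠ 0 := by rwa [mul_comm (y' s)]
    field_simp; ring_nf
    linear_combination (-2 * y s * y' s * (x s * y' s - y s * x' s)) * hC s
  have cF : ∀ s, (x s)^2 + C*(x' s)^2/(x s * y' s - y s * x' s)^2
      = (x 0)^2 + C*(x' 0)^2/(x 0 * y' 0 - y 0 * x' 0)^2 :=
    fun s => is_const_of_deriv_eq_zero (fun t => (hF t).differentiableAt)
      (fun t => (hF t).deriv) s 0
  have cG : ∀ s, x s * y s + C*(x' s * y' s)/(x s * y' s - y s * x' s)^2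
      = x 0 * y 0 + C*(x' 0 * y' 0)/(x 0 * y' 0 - y 0 * x' 0)^2 :=
    fun s => is_const_of_deriv_eq_zero (fun t => (hG t).differentiableAt)
      (fun t => (hG t).deriv) s 0
  have cH : ∀ s, (y s)^2 + C*(y' s)^2/(x s * y' s - y s * x' s)^2
      = (y 0)^2 + C*(y' 0)^2/(x 0 * y' 0 - y 0 * x' 0)^2 :=
    fun s => is_const_of_deriv_eq_zero (fun t => (hH t).differentiableAt)
      (fun t => (hH t).deriv) s 0
  refine ⟨(x 0)^2 + C*(x' 0)^2/(x 0 * y' 0 - y 0 * x' 0)^2,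
    x 0 * y 0 + C*(x' 0 * y' 0)/(x 0 * y' 0 - y 0 * x' 0)^2,
    (y 0)^2 + C*(y' 0)^2/(x 0 * y' 0 - y 0 * x' 0)^2, hC0, ?_, ?_, ?_⟩
  · rcases eq_or_lt_of_le (by positivity :
      (0:ℝ) ≤ (y 0)^2 + C*(y' 0)^2/(x 0 * y' 0 - y 0 * x' 0)^2) with h | h
    · exfalso
      have h1 := (add_eq_zero_iff_of_nonneg (sq_nonneg (y 0)) (by positivity)).mp h.symm
      have hy0 : y 0 = 0 := by
        have := h1.1; nlinarith [sq_nonneg (y 0)]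
      have hy'0 : y' 0 = 0 := by
        have h2 := h1.2
        rw [div_eq_zero_iff] at h2
        rcases h2 with h2 | h2
        · rcases mul_eq_zero.mp h2 with h3 | h3
          · exact absurd h3 (ne_of_gt hC0)
          · nlinarith [sq_nonneg (y' 0)]
        · exact absurd h2 (pow_ne_zero 2 (hpne 0))
      have hcon := hp 0
      rw [hy0, hy'0] at hcon
      simp at hcon
    · exact h
  · have h0 : (x 0 * y' 0 - y 0 * x' 0) ≠ 0 := hpne 0
    generalize hpdef : x 0 * y' 0 - y 0 * x' 0 = p at h0 ⊢
    field_simp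
    subst hpdef
    ring
  · intro s
    have hs : (x s * y' s - y s * x' s) ≠ 0 := hpne s
    rw [← cF s, ← cG s, ← cH s]
    generalize hpdef : x s * y' s - y s * x' s = p at hs ⊢
    field_simp
    subst hpdef
    ring

lemma ray_frontier {K : Set R2} (hKcomp : IsCompact K) (h0 : (0:R2) ∈ interior K)
    (z : R2) (hz : z ≠ 0) : ∃ t : ℝ, 0 ≤ t ∧ t • z ∈ frontier K := by
  set A : Set ℝ := {t : ℝ | 0 ≤ t ∧ t • z ∈ K} with hA
  have hA0 : (0:ℝ) ∈ A := ⟨le_refl 0, by simpa using interior_subset h0⟩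
  have hAne : A.Nonempty := ⟨0, hA0⟩
  have hAclosed : IsClosed A := by
    have : A = Set.Ici (0:ℝ) ∩ (fun t : ℝ => t • z) ⁻¹' K := by
      ext t; simp [hA, Set.mem_Ici, and_comm]
    rw [this]
    exact isClosed_Ici.inter (hKcomp.isClosed.preimage (continuous_id.smul continuous_const))
  have hAbdd : BddAbove A := by
    obtain ⟨R, hR⟩ := hKcomp.isBounded.exists_norm_le
    refine ⟨R / ‖z‖, fun t ht => ?_⟩
    have h1 := hR _ ht.2
    rw [norm_smul, Real.norm_eq_abs, abs_of_nonneg ht.1] at h1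
    rw [le_div_iff₀ (norm_pos_iff.mpr hz)]
    exact h1
  have htA : sSup A ∈ A := hAclosed.csSup_mem hAne hAbdd
  refine ⟨sSup A, htA.1, ?_⟩
  rw [frontier, hKcomp.isClosed.closure_eq]
  refine ⟨htA.2, fun hint => ?_⟩
  obtain ⟨ε, hε, hball⟩ := Metric.mem_nhds_iff.mp (mem_interior_iff_mem_nhds.mp hint)
  have hz' : 0 < ‖z‖ := norm_pos_iff.mpr hz
  have hmem : (sSup A + ε / (2 * ‖z‖)) ∈ A := by
    constructor
    · have h1 := htA.1
      have h2 : 0 < ε / (2 * ‖z‖) := by positivity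
      linarith
    · apply hball
      rw [Metric.mem_ball, dist_eq_norm]
      have : (sSup A + ε / (2 * ‖z‖)) • z - sSup A • z = (ε / (2 * ‖z‖)) • z := by
        rw [← sub_smul]; ring_nf
      rw [this, norm_smul, Real.norm_eq_abs, abs_of_pos (by positivity)]
      rw [div_mul_eq_mul_div, mul_comm]
      calc ‖z‖ * ε / (2 * ‖z‖) = ε / 2 := by field_simp
        _ < ε := by linarith
  have := le_csSup hAbdd hmem
  have hεpos : 0 < ε / (2 * ‖z‖) := by positivity
  linarith

noncomputable def mk2 (a b : ℝ) : R2 := (WithLp.equiv 2 (Fin 2 → ℝ)).symm ![a,b]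

@[simp] lemma mk2_zero (a b : ℝ) : mk2 a b 0 = a := by simp [mk2]
@[simp] lemma mk2_one (a b : ℝ) : mk2 a b 1 = b := by simp [mk2]

noncomputable def Tmap (sc sd β : ℝ) (hsc : sc ≠ 0) (hsd : sd ≠ 0) : R2 ≃ₗ[ℝ] R2 where
  toFun u := mk2 ((sc * u 0 + β * u 1)/sd) (sd * u 1)
  map_add' u v := by
    apply (WithLp.equiv 2 (Fin 2 → ℝ)).injective
    ext i
    fin_cases i <;> simp [mk2] <;> ring
  map_smul' c u := by
    apply (WithLp.equiv 2 (Fin 2 → ℝ)).injective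
    ext i
    fin_cases i <;> simp [mk2] <;> ring
  invFun z := mk2 ((sd * z 0 - β * (z 1 / sd))/sc) (z 1 / sd)
  left_inv u := by
    apply (WithLp.equiv 2 (Fin 2 → ℝ)).injective
    ext i
    fin_cases i <;> simp [mk2] <;> field_simp <;> ring
  right_inv z := by
    apply (WithLp.equiv 2 (Fin 2 → ℝ)).injective
    ext i
    fin_cases i <;> simp [mk2] <;> field_simp <;> ring

lemma exists_T (α β δ C : ℝ) (hC : 0 < C) (hδ : 0 < δ) (hdet : α*δ - β^2 = C) :
    ∃ T : R2 ≃ₗ[ℝ] R2, (fun x => T x) '' Metric.sphere (0:R2) 1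
      = {z : R2 | δ*(z 0)^2 - 2*β*(z 0)*(z 1) + α*(z 1)^2 = C} := by
  set sc := Real.sqrt C with hsc
  set sd := Real.sqrt δ with hsd
  have hsc2 : sc^2 = C := Real.sq_sqrt hC.le
  have hsd2 : sd^2 = δ := Real.sq_sqrt hδ.le
  have hscpos : 0 < sc := Real.sqrt_pos.mpr hC
  have hsdpos : 0 < sd := Real.sqrt_pos.mpr hδ
  have hscne : sc ≠ 0 := ne_of_gt hscpos
  have hsdne : sd ≠ 0 := ne_of_gt hsdpos
  set T : R2 ≃ₗ[ℝ] R2 := Tmap sc sd β hscne hsdne with hT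
  refine ⟨T, ?_⟩
  have hnorm : ∀ u : R2, u ∈ Metric.sphere (0:R2) 1 ↔ (u 0)^2 + (u 1)^2 = 1 := by
    intro u
    rw [mem_sphere_zero_iff_norm, EuclideanSpace.norm_eq, Fin.sum_univ_two, Real.sqrt_eq_one]
    simp [Real.norm_eq_abs, sq_abs]
  have hQ : ∀ u : R2, δ*((mk2 ((sc * u 0 + β * u 1)/sd) (sd * u 1)) 0)^2
      - 2*β*((mk2 ((sc * u 0 + β * u 1)/sd) (sd * u 1)) 0)*((mk2 ((sc * u 0 + β * u 1)/sd) (sd * u 1)) 1)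
      + α*((mk2 ((sc * u 0 + β * u 1)/sd) (sd * u 1)) 1)^2 = C * ((u 0)^2 + (u 1)^2) := by
    intro u
    have hdet2 : α * sd^2 - β^2 = sc^2 := by rw [hsc2, hsd2]; exact hdet
    simp only [mk2_zero, mk2_one]
    rw [← hsc2, ← hsd2]
    field_simp
    ring_nf
    linear_combination (u 1)^2 * hdet2
  have hTapp : ∀ u : R2, T u = mk2 ((sc * u 0 + β * u 1)/sd) (sd * u 1) := fun u => rfl
  ext z
  simp only [Set.mem_image, Set.mem_setOf_eq]
  constructor
  · rintro ⟨u, hu, rfl⟩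
    rw [hnorm] at hu
    rw [hTapp, hQ u, hu, mul_one]
  · intro hz
    refine ⟨T.symm z, (hnorm _).mpr ?_, T.apply_symm_apply z⟩
    have h2 := hQ (T.symm z)
    rw [← hTapp (T.symm z), T.apply_symm_apply] at h2
    have h3 : C * 1 = C * ((T.symm z 0)^2 + (T.symm z 1)^2) := by
      rw [mul_one]
      calc C = δ * z 0 ^ 2 - 2 * β * z 0 * z 1 + α * z 1 ^ 2 := hz.symm
        _ = C * ((T.symm z 0)^2 + (T.symm z 1)^2) := h2
    exact (mul_left_cancel₀ (ne_of_gt hC) h3).symm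

end Aux

/-- Petty's characterization of ellipses — the class `F₂` consists only of
ellipses. -/
theorem stmt17
    (γ : ℝ → R2) (L : ℝ) (hL : 0 < L)
    (hγ : ContDiff ℝ 2 γ)
    (hper : ∀ s, γ (s + L) = γ s)
    (hreg : ∀ s, deriv γ s ≠ 0)
    (hinj : Set.InjOn γ (Set.Ico 0 L))
    (hsym : ∀ s, γ (s + L/2) = -γ s)
    (K : Set R2) (hKconv : Convex ℝ K) (hKcomp : IsCompact K)
    (hKint : (interior K).Nonempty) (hKbd : frontier K = Set.range γ)
    (hKsym : -K = K)
    (h1 : ∀ s, 0 < det2 (γ s) (deriv γ s))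
    (h2 : ∀ s, 0 < det2 (deriv γ s) (deriv (deriv γ) s))
    (hconst : ∃ C : ℝ, ∀ s,
      det2 (γ s) (deriv γ s) ^ 3 / det2 (deriv γ s) (deriv (deriv γ) s) = C) :
    ∃ T : R2 ≃ₗ[ℝ] R2, Set.range γ = (fun x => T x) '' Metric.sphere (0:R2) 1 := by
  obtain ⟨C, hCs⟩ := hconst
  simp only [det2] at h1 h2 hCs
  -- differentiability
  have hγ1 : Differentiable ℝ γ := hγ.differentiable (by norm_num)
  have hγ2 : Differentiable ℝ (deriv γ) := by
    have h : ContDiff ℝ (1+1) γ := by norm_num; exact hγ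
    exact ((contDiff_succ_iff_deriv).mp h).2.2.differentiable (by norm_num)
  have hx : ∀ s, HasDerivAt (fun t => γ t 0) (deriv γ s 0) s := by
    intro s
    exact (EuclideanSpace.proj (0:Fin 2)).hasFDerivAt.comp_hasDerivAt s (hγ1 s).hasDerivAt
  have hy : ∀ s, HasDerivAt (fun t => γ t 1) (deriv γ s 1) s := by
    intro s
    exact (EuclideanSpace.proj (1:Fin 2)).hasFDerivAt.comp_hasDerivAt s (hγ1 s).hasDerivAt
  have hx' : ∀ s, HasDerivAt (fun t => deriv γ t 0) (deriv (deriv γ) s 0) s := by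
    intro s
    exact (EuclideanSpace.proj (0:Fin 2)).hasFDerivAt.comp_hasDerivAt s (hγ2 s).hasDerivAt
  have hy' : ∀ s, HasDerivAt (fun t => deriv γ t 1) (deriv (deriv γ) s 1) s := by
    intro s
    exact (EuclideanSpace.proj (1:Fin 2)).hasFDerivAt.comp_hasDerivAt s (hγ2 s).hasDerivAt
  have hC : ∀ s, C * (deriv γ s 0 * deriv (deriv γ) s 1 - deriv γ s 1 * deriv (deriv γ) s 0)
      = (γ s 0 * deriv γ s 1 - γ s 1 * deriv γ s 0)^3 := by
    intro s
    have h := hCs s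
    rw [div_eq_iff (ne_of_gt (h2 s))] at h
    linarith [h]
  obtain ⟨α, β, δ, hC0, hδ0, hdet, hinv⟩ :=
    ellipse_invariant (fun t => γ t 0) (fun t => γ t 1)
      (fun t => deriv γ t 0) (fun t => deriv γ t 1)
      (fun t => deriv (deriv γ) t 0) (fun t => deriv (deriv γ) t 1) C
      hx hy hx' hy' h1 h2 hC
  obtain ⟨T, hTE⟩ := exists_T α β δ C hC0 hδ0 hdet
  refine ⟨T, ?_⟩
  rw [hTE]
  -- 0 is in the interior of K
  obtain ⟨u, hu⟩ := hKint
  have huK : -u ∈ K := by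
    have h : u ∈ -K := hKsym.symm ▸ interior_subset hu
    exact Set.mem_neg.mp h
  have h0K : (0:R2) ∈ interior K := by
    have h := hKconv.combo_interior_closure_mem_interior hu (subset_closure huK)
      (by norm_num : (0:ℝ) < 1/2) (by norm_num : (0:ℝ) ≤ 1/2) (by norm_num)
    have heq : (1/2:ℝ) • u + (1/2:ℝ) • (-u) = (0:R2) := by
      rw [smul_neg, add_neg_cancel]
    rwa [heq] at h
  -- range γ ⊆ E
  set E : Set R2 := {z : R2 | δ*(z 0)^2 - 2*β*(z 0)*(z 1) + α*(z 1)^2 = C} with hE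
  have hsub : Set.range γ ⊆ E := by
    rintro z ⟨s, rfl⟩
    exact hinv s
  -- E ⊆ frontier K = range γ
  have hsup : E ⊆ Set.range γ := by
    intro z hzE
    have hz0 : z ≠ 0 := by
      intro h
      have e0 : ((0:R2) 0) = 0 := rfl
      have e1 : ((0:R2) 1) = 0 := rfl
      rw [h] at hzE
      simp only [hE, Set.mem_setOf_eq, e0, e1] at hzE
      norm_num at hzE
      linarith
    obtain ⟨t, ht0, htf⟩ := ray_frontier hKcomp h0K z hz0
    have htE : t • z ∈ E := by
      rw [hKbd] at htf
      exact hsub htf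
    have hsmul0 : (t • z) 0 = t * z 0 := rfl
    have hsmul1 : (t • z) 1 = t * z 1 := rfl
    simp only [hE, Set.mem_setOf_eq, hsmul0, hsmul1] at htE hzE
    have ht2 : t^2 * C = C := by
      linear_combination htE - t^2 * hzE
    have ht1 : t = 1 := by
      have : t^2 = 1 := by
        have := mul_right_cancel₀ (ne_of_gt hC0) (ht2.trans (one_mul C).symm)
        linarith [this]
      nlinarith
    rw [ht1, one_smul] at htf
    rw [hKbd] at htf
    exact htf
  exact Set.Subset.antisymm hsub hsup
end
end

section
/- Let γ : ℝ → ℝ² be an L-periodic regular curve of class C¹ and let t, u : ℝ → ℝ be differentiable with s < t(s) < u(s) < s + L for all s, forming an inscribed triangle carousel with vertices x = γ(s), y = γ(t(s)), z = γ(u(s)). Assume: (a) the constant-area derivative relations t'(s) = −det(γ(t(s)) − γ(s), γ'(s)) / det(γ(t(s)) − γ(s), γ'(t(s))) and u'(s) = −det(γ(u(s)) − γ(s), γ'(s)) / det(γ(u(s)) − γ(s), γ'(u(s))) hold (with the denominators nonzero); and (b) the tangent line at each vertex is parallel to the opposite side: det(γ(u(s)) − γ(t(s)), γ'(s)) = 0,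 det(γ(s) − γ(u(s)), γ'(t(s))) = 0, det(γ(t(s)) − γ(s), γ'(u(s))) = 0, where the first coordinates of the differences γ(u(s)) − γ(t(s)), γ(s) − γ(u(s)), γ(t(s)) − γ(s) are nonzero. Then the centroid μ(s) = (γ(s) + γ(t(s)) + γ(u(s)))/3 of the inscribed triangle satisfies μ'(s) = 0 for all s; in particular μ is a fixed point of the carousel. -/
open Real MeasureTheory intervalIntegral

noncomputable section

lemma carousel_key (a0 a1 b0 b1 c0 c1 p0 p1 q0 q1 r0 r1 T U : ℝ)
    (h1 : (c0 - b0) * p1 - (c1 - b1) * p0 = 0)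
    (h2 : (a0 - c0) * q1 - (a1 - c1) * q0 = 0)
    (h3 : (b0 - a0) * r1 - (b1 - a1) * r0 = 0)
    (hx1 : c0 - b0 ≠ 0) (hx2 : a0 - c0 ≠ 0) (hx3 : b0 - a0 ≠ 0)
    (hD1 : (b0 - a0) * q1 - (b1 - a1) * q0 ≠ 0)
    (hD2 : (c0 - a0) * r1 - (c1 - a1) * r0 ≠ 0)
    (hT : T = -((b0 - a0) * p1 - (b1 - a1) * p0) / ((b0 - a0) * q1 - (b1 - a1) * q0))
    (hU : U = -((c0 - a0) * p1 - (c1 - a1) * p0) / ((c0 - a0) * r1 - (c1 - a1) * r0)) :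
    p0 + T * q0 + U * r0 = 0 ∧ p1 + T * q1 + U * r1 = 0 := by
  set k := p0 / (c0 - b0) with hk
  have hp0 : p0 = k * (c0 - b0) := by rw [hk, div_mul_cancel₀ _ hx1]
  have hp1 : p1 = k * (c1 - b1) := by
    rw [hk]; field_simp; linear_combination h1
  set β := q0 / (a0 - c0) with hβ
  have hq0 : q0 = β * (a0 - c0) := by rw [hβ, div_mul_cancel₀ _ hx2]
  have hq1 : q1 = β * (a1 - c1) := by
    rw [hβ]; field_simp; linear_combination h2
  set δ := r0 / (b0 - a0) with hδ
  have hr0 : r0 = δ * (b0 - a0) := by rw [hδ, div_mul_cancel₀ _ hx3]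
  have hr1 : r1 = δ * (b1 - a1) := by
    rw [hδ]; field_simp; linear_combination h3
  rw [hq0, hq1] at hD1
  rw [hr0, hr1] at hD2
  rw [hp0, hp1, hq0, hq1] at hT
  rw [hp0, hp1, hr0, hr1] at hU
  rw [hp0, hp1, hq0, hq1, hr0, hr1]
  have hTq0 : T * (β * (a0 - c0)) = k * (a0 - c0) := by
    rw [hT, div_mul_eq_mul_div, div_eq_iff hD1]; ring
  have hTq1 : T * (β * (a1 - c1)) = k * (a1 - c1) := by
    rw [hT, div_mul_eq_mul_div, div_eq_iff hD1]; ring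
  have hUr0 : U * (δ * (b0 - a0)) = k * (b0 - a0) := by
    rw [hU, div_mul_eq_mul_div, div_eq_iff hD2]; ring
  have hUr1 : U * (δ * (b1 - a1)) = k * (b1 - a1) := by
    rw [hU, div_mul_eq_mul_div, div_eq_iff hD2]; ring
  rw [hTq0, hTq1, hUr0, hUr1]
  constructor <;> ring

/-- the centroid of the inscribed triangle of a three-chair carousel whose
tangent lines are parallel to the opposite sides is a fixed point. -/
theorem stmt19
    (γ : ℝ → R2) (L : ℝ) (hL : 0 < L)
    (hγ : ContDiff ℝ 1 γ)
    (hper : ∀ s, γ (s + L) = γ s)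
    (hreg : ∀ s, deriv γ s ≠ 0)
    (t u : ℝ → ℝ) (htd : Differentiable ℝ t) (hud : Differentiable ℝ u)
    (horder : ∀ s, s < t s ∧ t s < u s ∧ u s < s + L)
    (hden1 : ∀ s, det2 (γ (t s) - γ s) (deriv γ (t s)) ≠ 0)
    (hden2 : ∀ s, det2 (γ (u s) - γ s) (deriv γ (u s)) ≠ 0)
    (ht' : ∀ s, deriv t s =
      -(det2 (γ (t s) - γ s) (deriv γ s)) / det2 (γ (t s) - γ s) (deriv γ (t s)))
    (hu' : ∀ s, deriv u s =
      -(det2 (γ (u s) - γ s) (deriv γ s)) / det2 (γ (u s) - γ s) (deriv γ (u s)))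
    (hpar1 : ∀ s, det2 (γ (u s) - γ (t s)) (deriv γ s) = 0)
    (hpar2 : ∀ s, det2 (γ s - γ (u s)) (deriv γ (t s)) = 0)
    (hpar3 : ∀ s, det2 (γ (t s) - γ s) (deriv γ (u s)) = 0)
    (hx1 : ∀ s, (γ (u s) - γ (t s)) 0 ≠ 0)
    (hx2 : ∀ s, (γ s - γ (u s)) 0 ≠ 0)
    (hx3 : ∀ s, (γ (t s) - γ s) 0 ≠ 0) :
    ∀ s : ℝ, deriv (fun s => ((1:ℝ)/3) • (γ s + γ (t s) + γ (u s))) s = 0 := by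
  intro s
  have hγd : Differentiable ℝ γ := hγ.differentiable one_ne_zero
  have hγs : HasDerivAt γ (deriv γ s) s := (hγd s).hasDerivAt
  have hγt : HasDerivAt (fun x => γ (t x)) (deriv t s • deriv γ (t s)) s :=
    HasDerivAt.scomp s ((hγd (t s)).hasDerivAt) ((htd s).hasDerivAt)
  have hγu : HasDerivAt (fun x => γ (u x)) (deriv u s • deriv γ (u s)) s :=
    HasDerivAt.scomp s ((hγd (u s)).hasDerivAt) ((hud s).hasDerivAt)
  have hD : HasDerivAt (fun x => ((1:ℝ)/3) • (γ x + γ (t x) + γ (u x)))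
      (((1:ℝ)/3) • (deriv γ s + deriv t s • deriv γ (t s) + deriv u s • deriv γ (u s))) s :=
    by have := ((hγs.add hγt).add hγu).const_smul ((1:ℝ)/3); exact this
  rw [hD.deriv]
  have key : deriv γ s + deriv t s • deriv γ (t s) + deriv u s • deriv γ (u s) = 0 := by
    -- set up the scalar data
    obtain ⟨K0, K1⟩ := carousel_key (γ s 0) (γ s 1) (γ (t s) 0) (γ (t s) 1)
      (γ (u s) 0) (γ (u s) 1)
      (deriv γ s 0) (deriv γ s 1) (deriv γ (t s) 0) (deriv γ (t s) 1)
      (deriv γ (u s) 0) (deriv γ (u s) 1) (deriv t s) (deriv u s)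
      (by have := hpar1 s; simpa [det2, PiLp.sub_apply] using this)
      (by have := hpar2 s; simpa [det2, PiLp.sub_apply] using this)
      (by have := hpar3 s; simpa [det2, PiLp.sub_apply] using this)
      (by have := hx1 s; simpa [PiLp.sub_apply] using this)
      (by have := hx2 s; simpa [PiLp.sub_apply] using this)
      (by have := hx3 s; simpa [PiLp.sub_apply] using this)
      (by have := hden1 s; simpa [det2, PiLp.sub_apply] using this)
      (by have := hden2 s; simpa [det2, PiLp.sub_apply] using this)
      (by have := ht' s; simpa [det2, PiLp.sub_apply] using this)
      (by have := hu' s; simpa [det2, PiLp.sub_apply] using this)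
    ext i
    fin_cases i
    · simpa [PiLp.add_apply, PiLp.smul_apply, smul_eq_mul] using K0
    · simpa [PiLp.add_apply, PiLp.smul_apply, smul_eq_mul] using K1
  rw [key, smul_zero]
end
end
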